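/- Properties of the rotational Killing tensors: let K be the symmetric tensor field on ℝ³ with components K¹¹ = a₁ − 2b₁₂z + c₂z² + c₃y², K¹² = −c₃xy, K¹³ = b₁₂x − c₂xz, K²² = a₁ − 2b₁₂z + c₃x² + c₂z², K²³ = b₁₂y − c₂yz, K³³ = a₃ + c₂(x² + y²), for arbitrary real parameters a₁, a₃, b₁₂, c₂, c₃. Then: (i) K is invariant under the rotational Killing vector V(x,y,z) = (y, −x, 0), i.e. Σ_k V^k ∂_k K^{ij} − Σ_k K^{kj} ∂_k V^i − Σ_k K^{ik} ∂_k V^j = 0 identically for all i, j; and (ii) for every t ∈ ℝ the translated tensor K̃(x,y,z) := K(x, y, z + t) is of the same form with parameters ã₁ = a₁ − 2b₁₂t + c₂t², ã₃ = a₃, b̃₁₂ = b₁₂ − c₂t, c̃₂ = c₂, c̃₃ = c₃, so the four fundamental I(ℝ)-invariants Δ₁ = c₂, Δ₂ = b₁₂² + c₂(a₃ − a₁), Δ₃ = a₃, Δ₄ = c₃ are unchanged: in particular b̃₁₂² + c̃₂(ã₃ − ã₁) = b₁₂² + c₂(a₃ − a₁). -/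

import Mathlib

open Matrix

/-- 3×3 real matrices. -/
abbrev M3 := Matrix (Fin 3) (Fin 3) ℝ

/-- Partial derivative `∂_k f` at `x`. -/
noncomputable def pder (k : Fin 3) (f : (Fin 3 → ℝ) → ℝ) (x : Fin 3 → ℝ) : ℝ :=
  fderiv ℝ f x (Pi.single k 1)

/-- The rotational Killing tensor with parameters `a₁ a₃ b₁₂ c₂ c₃`. -/
def Kr (a₁ a₃ b₁₂ c₂ c₃ : ℝ) (p : Fin 3 → ℝ) : M3 :=
  !![a₁ - 2 * b₁₂ * p 2 + c₂ * (p 2) ^ 2 + c₃ * (p 1) ^ 2,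
       -c₃ * p 0 * p 1, b₁₂ * p 0 - c₂ * p 0 * p 2;
     -c₃ * p 0 * p 1,
       a₁ - 2 * b₁₂ * p 2 + c₃ * (p 0) ^ 2 + c₂ * (p 2) ^ 2,
       b₁₂ * p 1 - c₂ * p 1 * p 2;
     b₁₂ * p 0 - c₂ * p 0 * p 2, b₁₂ * p 1 - c₂ * p 1 * p 2,
       a₃ + c₂ * ((p 0) ^ 2 + (p 1) ^ 2)]

/-- The rotational Killing vector `V(x,y,z) = (y, −x, 0)`. -/
def Vrot3 (p : Fin 3 → ℝ) : Fin 3 → ℝ := ![p 1, -p 0, 0]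

/-!
`V` is the linear field `x ↦ A x` generated by the rotations about the `z`-axis, so
`∂_k V^i = A_{ik}` and the Lie derivative of `K` along `V` is `D_V K − (A K + K Aᵀ)`.
For the rotational tensor the derivative of each (polynomial) entry along `V` is exactly the
corresponding entry of `A K + K Aᵀ`.
-/

section PartialDerivative

variable {k : Fin 3} {x : Fin 3 → ℝ} {f g : (Fin 3 → ℝ) → ℝ}

lemma pder_continuousLinearMap (L : (Fin 3 → ℝ) →L[ℝ] ℝ) :
    pder k (fun y => L y) x = L (Pi.single k 1) := by
  simp [pder, L.fderiv]

lemma pder_apply (m : Fin 3) : pder k (fun y => y m) x = if m = k then 1 else 0 := by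
  simpa [Pi.single_apply] using pder_continuousLinearMap (k := k) (x := x) (.proj m)

lemma pder_mulVec_apply (A : M3) (i : Fin 3) : pder k (fun y => (A *ᵥ y) i) x = A i k := by
  simpa using pder_continuousLinearMap (k := k) (x := x)
    ((ContinuousLinearMap.proj i).comp (LinearMap.toContinuousLinearMap (Matrix.toLin' A)))

lemma pder_const (c : ℝ) : pder k (fun _ => c) x = 0 := by simp [pder]

lemma pder_neg : pder k (fun y => -f y) x = -pder k f x := by simp [pder]

lemma pder_add (hf : DifferentiableAt ℝ f x) (hg : DifferentiableAt ℝ g x) :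
    pder k (fun y => f y + g y) x = pder k f x + pder k g x := by
  simp [pder, fderiv_fun_add hf hg]

lemma pder_sub (hf : DifferentiableAt ℝ f x) (hg : DifferentiableAt ℝ g x) :
    pder k (fun y => f y - g y) x = pder k f x - pder k g x := by
  simp [pder, fderiv_fun_sub hf hg]

lemma pder_mul (hf : DifferentiableAt ℝ f x) (hg : DifferentiableAt ℝ g x) :
    pder k (fun y => f y * g y) x = f x * pder k g x + g x * pder k f x := by
  simp [pder, fderiv_fun_mul hf hg]

end PartialDerivative

noncomputable def tensorLieDeriv (V : (Fin 3 → ℝ) → Fin 3 → ℝ) (K : (Fin 3 → ℝ) → M3)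
    (x : Fin 3 → ℝ) (i j : Fin 3) : ℝ :=
  (∑ k : Fin 3, V x k * pder k (fun y => K y i j) x)
    - (∑ k : Fin 3, K x k j * pder k (fun y => V y i) x)
    - (∑ k : Fin 3, K x i k * pder k (fun y => V y j) x)

lemma tensorLieDeriv_mulVec (A : M3) (K : (Fin 3 → ℝ) → M3) (x : Fin 3 → ℝ) (i j : Fin 3) :
    tensorLieDeriv (A *ᵥ ·) K x i j
      = ∑ k : Fin 3, (A *ᵥ x) k * pder k (fun y => K y i j) x - (A * K x + K x * Aᵀ) i j := by
  simp only [tensorLieDeriv, pder_mulVec_apply, Matrix.add_apply, Matrix.mul_apply,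
    Matrix.transpose_apply, mul_comm (K x _ j)]
  ring

def rotationGenerator : M3 := !![0, 1, 0; -1, 0, 0; 0, 0, 0]

lemma Vrot3_eq_mulVec (p : Fin 3 → ℝ) : Vrot3 p = rotationGenerator *ᵥ p := by
  ext i
  fin_cases i <;> simp [Vrot3, rotationGenerator, Matrix.mulVec, dotProduct, Fin.sum_univ_three]

lemma sum_Vrot3_mul_pder_Kr (a₁ a₃ b₁₂ c₂ c₃ : ℝ) (x : Fin 3 → ℝ) (i j : Fin 3) :
    ∑ k : Fin 3, Vrot3 x k * pder k (fun y => Kr a₁ a₃ b₁₂ c₂ c₃ y i j) x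
      = (rotationGenerator * Kr a₁ a₃ b₁₂ c₂ c₃ x
          + Kr a₁ a₃ b₁₂ c₂ c₃ x * rotationGeneratorᵀ) i j := by
  simp only [Matrix.add_apply, Matrix.mul_apply, Matrix.transpose_apply]
  fin_cases i <;> fin_cases j <;>
    simp (disch := fun_prop) [Kr, Vrot3, rotationGenerator, Fin.sum_univ_three, pow_two,
      pder_add, pder_sub, pder_mul, pder_neg, pder_apply, pder_const, Fin.ext_iff] <;>
    ring

lemma tensorLieDeriv_Vrot3_Kr (a₁ a₃ b₁₂ c₂ c₃ : ℝ) (x : Fin 3 → ℝ) (i j : Fin 3) :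
    tensorLieDeriv Vrot3 (Kr a₁ a₃ b₁₂ c₂ c₃) x i j = 0 := by
  have h := tensorLieDeriv_mulVec rotationGenerator (Kr a₁ a₃ b₁₂ c₂ c₃) x i j
  simp only [← Vrot3_eq_mulVec] at h
  rwa [sum_Vrot3_mul_pder_Kr, sub_self] at h

lemma Kr_add_single_two (a₁ a₃ b₁₂ c₂ c₃ t : ℝ) (x : Fin 3 → ℝ) :
    Kr a₁ a₃ b₁₂ c₂ c₃ (x + Pi.single 2 t)
      = Kr (a₁ - 2 * b₁₂ * t + c₂ * t ^ 2) a₃ (b₁₂ - c₂ * t) c₂ c₃ x := by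
  ext i j
  fin_cases i <;> fin_cases j <;> simp [Kr] <;> ring

/-- STATEMENT 11: (i) the rotational Killing tensor is invariant under the
rotational Killing vector `V = (y, −x, 0)` (vanishing Lie derivative), and
(ii) translating along the z-axis by `t` keeps the rotational form, with the four
fundamental `I(ℝ)`-invariants unchanged. -/
theorem rotational_Killing_tensor_properties (a₁ a₃ b₁₂ c₂ c₃ : ℝ) :
    (∀ (x : Fin 3 → ℝ) (i j : Fin 3),
      (∑ k : Fin 3, Vrot3 x k * pder k (fun y => Kr a₁ a₃ b₁₂ c₂ c₃ y i j) x)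
        - (∑ k : Fin 3, Kr a₁ a₃ b₁₂ c₂ c₃ x k j * pder k (fun y => Vrot3 y i) x)
        - (∑ k : Fin 3, Kr a₁ a₃ b₁₂ c₂ c₃ x i k * pder k (fun y => Vrot3 y j) x)
        = 0) ∧
    (∀ t : ℝ,
      (∀ x : Fin 3 → ℝ,
        Kr a₁ a₃ b₁₂ c₂ c₃ (x + Pi.single 2 t)
          = Kr (a₁ - 2 * b₁₂ * t + c₂ * t ^ 2) a₃ (b₁₂ - c₂ * t) c₂ c₃ x) ∧
      (b₁₂ - c₂ * t) ^ 2 + c₂ * (a₃ - (a₁ - 2 * b₁₂ * t + c₂ * t ^ 2))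
        = b₁₂ ^ 2 + c₂ * (a₃ - a₁)) :=
  ⟨tensorLieDeriv_Vrot3_Kr a₁ a₃ b₁₂ c₂ c₃,
    fun t => ⟨Kr_add_single_two a₁ a₃ b₁₂ c₂ c₃ t, by ring⟩⟩
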